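/- arXiv:1604.05915 — 2 statements merged into one kernel-verified Lean document; each statement's English description precedes it below -/
import Mathlib

section
/- A graph G is simply connected (every loop is contractible via elementary homotopies) if and only if every simple cycle of G is contractible. -/
/-- A loop based at `v₀`: a nonempty sequence of vertices starting and ending at `v₀`
in which consecutive vertices are equal or adjacent. -/
def IsLoopAt {V : Type*} (G : SimpleGraph V) (v₀ : V) (l : List V) : Prop :=
  l.head? = some v₀ ∧ l.getLast? = some v₀ ∧
    l.Chain' (fun a b => a = b ∨ G.Adj a b)

/-- One (length-decreasing) elementary homotopy move between sequences of vertices: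
contracting a repeated vertex, removing a backtrack, or pushing across a 2-cell
(a triangle). -/
def ElemHomotopy {V : Type*} (G : SimpleGraph V) : List V → List V → Prop :=
  fun l l' =>
    (∃ (p : List V) (a : V) (s : List V),
        l = p ++ [a, a] ++ s ∧ l' = p ++ [a] ++ s) ∨
    (∃ (p : List V) (a b : V) (s : List V),
        l = p ++ [a, b, a] ++ s ∧ l' = p ++ [a] ++ s) ∨
    (∃ (p : List V) (a b c : V) (s : List V), G.Adj a c ∧
        l = p ++ [a, b, c] ++ s ∧ l' = p ++ [a, c] ++ s)

/-- Homotopy of vertex sequences: the reflexive-transitive-symmetric closure of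
elementary homotopy moves. -/
def Homotopic {V : Type*} (G : SimpleGraph V) : List V → List V → Prop :=
  Relation.EqvGen (ElemHomotopy G)

/-- A loop is contractible if it can be reduced to a single vertex by a finite
sequence of elementary homotopies. -/
def Contractible {V : Type*} (G : SimpleGraph V) (l : List V) : Prop :=
  ∃ v : V, Homotopic G l [v]

/-- A graph is simply connected if every loop is contractible (to its basepoint). -/
def SimplyConnected {V : Type*} (G : SimpleGraph V) : Prop :=
  ∀ (v₀ : V) (l : List V), IsLoopAt G v₀ l → Homotopic G l [v₀]

/-!
Only the converse needs an argument; it goes by induction on the length of a loop. A repeated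
consecutive vertex is contracted by one move. Otherwise the loop is a walk in `G`; if some vertex
repeats after the basepoint, the stretch between two of its occurrences is a shorter loop, which
contracts by induction and leaves a shorter loop behind. If nothing repeats, the loop is a single
vertex, a backtrack `v w v`, or a simple cycle.
-/

theorem List.exists_eq_append_cons_append_cons_of_not_nodup {α : Type*} {l : List α}
    (h : ¬ l.Nodup) : ∃ (A : List α) (u : α) (B C : List α), l = A ++ u :: B ++ u :: C := by
  obtain ⟨u, hu⟩ : ∃ u, List.Sublist [u, u] l := by simpa [List.nodup_iff_sublist] using h
  obtain ⟨r₁, r₂, rfl, h₁, h₂⟩ := List.cons_sublist_iff.mp hu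
  obtain ⟨A, B, rfl⟩ := List.append_of_mem h₁
  obtain ⟨B', C, rfl⟩ := List.append_of_mem (List.singleton_sublist.mp h₂)
  exact ⟨A, u, B ++ B', C, by simp⟩

theorem List.exists_eq_append_pair_of_not_isChain {α : Type*} {R : α → α → Prop} {l : List α}
    (h : l.IsChain (fun a b => a = b ∨ R a b)) (hR : ¬ l.IsChain R) :
    ∃ (p : List α) (a : α) (s : List α), l = p ++ [a, a] ++ s := by
  simp only [List.isChain_iff_forall_rel_of_append_cons_cons, not_forall] at h hR
  obtain ⟨a, b, p, s, rfl, hab⟩ := hR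
  obtain rfl : a = b := (h rfl).resolve_right hab
  exact ⟨p, a, s, by simp⟩

section Homotopy

variable {V : Type*} {G : SimpleGraph V}

theorem ElemHomotopy.append_append {l l' : List V} (p s : List V) (h : ElemHomotopy G l l') :
    ElemHomotopy G (p ++ l ++ s) (p ++ l' ++ s) := by
  rcases h with ⟨q, a, r, rfl, rfl⟩ | ⟨q, a, b, r, rfl, rfl⟩ | ⟨q, a, b, c, r, hac, rfl, rfl⟩
  · exact Or.inl ⟨p ++ q, a, r ++ s, by simp, by simp⟩
  · exact Or.inr (Or.inl ⟨p ++ q, a, b, r ++ s, by simp, by simp⟩)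
  · exact Or.inr (Or.inr ⟨p ++ q, a, b, c, r ++ s, hac, by simp, by simp⟩)

theorem Homotopic.append_append {l l' : List V} (p s : List V) (h : Homotopic G l l') :
    Homotopic G (p ++ l ++ s) (p ++ l' ++ s) := by
  induction h with
  | rel _ _ h => exact .rel _ _ (h.append_append p s)
  | refl => exact .refl _
  | symm _ _ _ ih => exact .symm _ _ ih
  | trans _ _ _ _ _ ih₁ ih₂ => exact .trans _ _ _ ih₁ ih₂

theorem SimpleGraph.Walk.isLoopAt_support {u : V} (c : G.Walk u u) : IsLoopAt G u c.support :=
  ⟨by cases c <;> simp, by simp [List.getLast?_eq_some_getLast],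
    c.isChain_adj_support.imp fun _ _ => Or.inr⟩

theorem IsLoopAt.collapse_subloop {v₀ u : V} {p m s : List V} (hl : IsLoopAt G v₀ (p ++ m ++ s))
    (hm : IsLoopAt G u m) : IsLoopAt G v₀ (p ++ [u] ++ s) := by
  obtain ⟨hhead, hlast, hchain⟩ := hl
  obtain ⟨hmhead, hmlast, -⟩ := hm
  refine ⟨by simpa [hmhead] using hhead, ?_, ?_⟩
  · simp only [List.getLast?_append, hmlast, List.getLast?_singleton, Option.some_or] at hlast ⊢
    exact hlast
  · show (p ++ [u] ++ s).IsChain _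
    replace hchain : (p ++ m ++ s).IsChain _ := hchain
    simp only [List.isChain_append, List.getLast?_append, hmhead, hmlast, List.head?_singleton,
      List.getLast?_singleton, List.isChain_singleton, true_and] at hchain ⊢
    exact ⟨⟨hchain.1.1, hchain.1.2.2⟩, hchain.2⟩

theorem SimpleGraph.Walk.isCycle_of_nodup_support_tail {u : V} {c : G.Walk u u}
    (hnd : c.support.tail.Nodup) (hlen : 3 ≤ c.length) : c.IsCycle := by
  rw [isCycle_iff_isPath_tail_and_le_length, isPath_def,
    support_tail_of_not_nil _ (not_nil_iff_lt_length.mpr (by omega))]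
  exact ⟨hnd, hlen⟩

theorem SimpleGraph.Walk.exists_isCycle_support_eq {v : V} {l : List V}
    (hchain : (v :: l).IsChain G.Adj) (hlast : (v :: l).getLast? = some v) (hnd : l.Nodup)
    (hlen : 3 ≤ l.length) : ∃ c : G.Walk v v, c.IsCycle ∧ c.support = v :: l := by
  have hv : (v :: l).getLast (List.cons_ne_nil v l) = v := by
    simpa [List.getLast?_eq_some_getLast] using hlast
  let c : G.Walk v v := (ofSupport _ _ hchain).copy (List.head_cons ..) hv
  have hsupp : c.support = v :: l := (support_copy ..).trans (support_ofSupport ..)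
  have hclen : c.length = l.length := by
    have := c.length_support
    simp only [hsupp, List.length_cons] at this
    omega
  exact ⟨c, isCycle_of_nodup_support_tail (by simpa [hsupp]) (hclen ▸ hlen), hsupp⟩

theorem homotopic_singleton_of_isChain_adj
    (hcyc : ∀ (v : V) (c : G.Walk v v), c.IsCycle → Homotopic G c.support [v])
    {v₀ : V} {l : List V} (hchain : (v₀ :: l).IsChain G.Adj)
    (hlast : (v₀ :: l).getLast? = some v₀) (hnd : l.Nodup) : Homotopic G (v₀ :: l) [v₀] := by
  match l, hchain, hlast, hnd with
  | [], _, _, _ => exact .refl _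
  | [y], hchain, hlast, _ =>
    obtain rfl : y = v₀ := by simpa using hlast
    exact absurd hchain.rel G.irrefl
  | [y, z], _, hlast, _ =>
    obtain rfl : z = v₀ := by simpa using hlast
    exact .rel _ _ (Or.inr (Or.inl ⟨[], z, y, [], rfl, rfl⟩))
  | y :: z :: w :: t, hchain, hlast, hnd =>
    obtain ⟨c, hc, hsupp⟩ := SimpleGraph.Walk.exists_isCycle_support_eq hchain hlast hnd (by simp)
    simpa [hsupp] using hcyc v₀ c hc

theorem homotopic_singleton_of_isLoopAt
    (hcyc : ∀ (v : V) (c : G.Walk v v), c.IsCycle → Homotopic G c.support [v])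
    {v₀ : V} {l : List V} (hl : IsLoopAt G v₀ l) : Homotopic G l [v₀] := by
  by_cases hadj : l.IsChain G.Adj
  · obtain ⟨rest, rfl⟩ : ∃ rest, l = v₀ :: rest := List.head?_eq_some_iff.mp hl.1
    by_cases hnd : rest.Nodup
    · exact homotopic_singleton_of_isChain_adj hcyc hadj hl.2.1 hnd
    · obtain ⟨A, u, B, C, rfl⟩ := List.exists_eq_append_cons_append_cons_of_not_nodup hnd
      have hsub : IsLoopAt G u (u :: B ++ [u]) :=
        ⟨rfl, List.getLast?_concat .., hl.2.2.infix ⟨v₀ :: A, C, by simp⟩⟩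
      have hsplit : v₀ :: (A ++ u :: B ++ u :: C) = v₀ :: A ++ (u :: B ++ [u]) ++ C := by simp
      rw [hsplit] at hl ⊢
      exact ((homotopic_singleton_of_isLoopAt hcyc hsub).append_append _ _).trans _ _ _
        (homotopic_singleton_of_isLoopAt hcyc (hl.collapse_subloop hsub))
  · obtain ⟨p, a, s, rfl⟩ := List.exists_eq_append_pair_of_not_isChain hl.2.2 hadj
    have hpair : IsLoopAt G a [a, a] := ⟨rfl, rfl, List.isChain_pair.mpr (Or.inl rfl)⟩
    exact .trans _ _ _ (.rel _ _ (Or.inl ⟨p, a, s, rfl, rfl⟩))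
      (homotopic_singleton_of_isLoopAt hcyc (hl.collapse_subloop hpair))
termination_by l.length
decreasing_by all_goals subst_vars; grind

end Homotopy

/-- A graph is simply connected iff every simple cycle is contractible. -/
theorem stmt11 {V : Type*} (G : SimpleGraph V) :
    SimplyConnected G ↔
      ∀ (v : V) (c : G.Walk v v), c.IsCycle → Homotopic G c.support [v] :=
  ⟨fun h v c _ => h v c.support c.isLoopAt_support,
    fun hcyc _ _ hl => homotopic_singleton_of_isLoopAt hcyc hl⟩
end

section
/- In a Weetman graph G with base vertex v₀, every cluster C at level k ≥ 1 has exactly one neighboring cluster at level k−1 (a unique ancestor cluster a(C)), and consequently every path from v₀ to any vertex of C passes through a vertex of a(C). -/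
def TriangleCondition {V : Type*} (G : SimpleGraph V) (v₀ : V) : Prop :=
  ∀ v v' : V, G.Adj v v' → G.dist v₀ v = G.dist v₀ v' →
    ∃ u : V, G.Adj u v ∧ G.Adj u v' ∧ G.dist v₀ u = G.dist v₀ v - 1

def predSet {V : Type*} (G : SimpleGraph V) (v₀ v : V) : Set V :=
  {u : V | G.Adj u v ∧ G.dist v₀ u = G.dist v₀ v - 1}

def IntervalCondition {V : Type*} (G : SimpleGraph V) (v₀ : V) : Prop :=
  ∀ v : V, (G.induce (predSet G v₀ v)).Preconnected

def IsWeetman {V : Type*} (G : SimpleGraph V) : Prop :=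
  ∀ v₀ : V, TriangleCondition G v₀ ∧ IntervalCondition G v₀

/-- The sphere of radius `k` around `v₀`. -/
def sphere {V : Type*} (G : SimpleGraph V) (v₀ : V) (k : ℕ) : Set V :=
  {v : V | G.dist v₀ v = k}

/-- A cluster: a connected component of the subgraph induced on some sphere around `v₀`. -/
def Cluster {V : Type*} (G : SimpleGraph V) (v₀ : V) : Type _ :=
  Σ k : ℕ, (G.induce (sphere G v₀ k)).ConnectedComponent

/-- Membership of a vertex in a cluster. -/
def memCluster {V : Type*} (G : SimpleGraph V) (v₀ : V) (v : V)
    (C : Cluster G v₀) : Prop :=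
  ∃ hv : v ∈ sphere G v₀ C.1,
    (G.induce (sphere G v₀ C.1)).connectedComponentMk ⟨v, hv⟩ = C.2

/-- The graph of clusters: clusters are vertices, two distinct clusters being adjacent
whenever they contain adjacent vertices of `G`. -/
def clusterGraph {V : Type*} (G : SimpleGraph V) (v₀ : V) :
    SimpleGraph (Cluster G v₀) where
  Adj C C' := C ≠ C' ∧ ∃ u w : V, G.Adj u w ∧ memCluster G v₀ u C ∧ memCluster G v₀ w C'
  symm := ⟨by
    rintro C C' ⟨hne, u, w, hadj, hu, hw⟩
    exact ⟨Ne.symm hne, w, u, hadj.symm, hw, hu⟩⟩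
  loopless := ⟨by rintro C ⟨hne, -⟩; exact hne rfl⟩

/-- The cluster of a given vertex. -/
noncomputable def clusterOf {V : Type*} (G : SimpleGraph V) (v₀ v : V) : Cluster G v₀ :=
  ⟨G.dist v₀ v, (G.induce (sphere G v₀ (G.dist v₀ v))).connectedComponentMk ⟨v, rfl⟩⟩

/-! The predecessors of the vertices of a cluster `C` all lie in one cluster: the Interval
Condition connects the predecessors of a single vertex, and along an edge inside a sphere the
Triangle Condition supplies a common predecessor. Any lower neighbour of `C` contains a
predecessor of a vertex of `C`, so it is this cluster. For the walk statement, follow a walk from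
a vertex `v` of `C` back to `v₀`. A step down lands in the ancestor cluster, a step sideways
keeps the ancestor cluster, and after a step up the walk must, by recursion, come back to the
cluster of `v`; from that vertex one recurses again on a strictly shorter walk. -/

open SimpleGraph

section

variable {V : Type*} {G : SimpleGraph V} {v₀ : V}

theorem memCluster_iff_clusterOf_eq {v : V} {C : Cluster G v₀} :
    memCluster G v₀ v C ↔ clusterOf G v₀ v = C := by
  constructor
  · obtain ⟨k, c⟩ := C
    rintro ⟨hv, hc⟩
    obtain rfl : G.dist v₀ v = k := hv
    exact Sigma.ext rfl (heq_of_eq hc)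
  · rintro rfl
    exact ⟨rfl, rfl⟩

theorem mem_clusterOf (v : V) : memCluster G v₀ v (clusterOf G v₀ v) :=
  memCluster_iff_clusterOf_eq.2 rfl

theorem exists_clusterOf_eq (C : Cluster G v₀) : ∃ v, clusterOf G v₀ v = C := by
  obtain ⟨⟨v, hv⟩, hc⟩ := C.2.exists_rep
  exact ⟨v, memCluster_iff_clusterOf_eq.1 ⟨hv, hc⟩⟩

theorem clusterOf_eq_clusterOf_iff {k : ℕ} {v v' : V} (hv : G.dist v₀ v = k)
    (hv' : G.dist v₀ v' = k) :
    clusterOf G v₀ v = clusterOf G v₀ v' ↔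
      (G.induce (sphere G v₀ k)).Reachable ⟨v, hv⟩ ⟨v', hv'⟩ := by
  subst hv
  rw [eq_comm, ← memCluster_iff_clusterOf_eq]
  exact ⟨fun ⟨_, h⟩ ↦ (ConnectedComponent.eq.1 h).symm,
    fun h ↦ ⟨hv', ConnectedComponent.eq.2 h.symm⟩⟩

theorem exists_mem_predSet {v : V} (hv : G.dist v₀ v ≠ 0) : ∃ u, u ∈ predSet G v₀ v := by
  obtain ⟨p, hp⟩ := exists_walk_of_dist_ne_zero (dist_comm ▸ hv : G.dist v v₀ ≠ 0)
  have hnil : ¬p.Nil := by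
    rw [← Walk.length_eq_zero_iff, hp, dist_comm]
    exact hv
  have hadj := p.adj_snd hnil
  refine ⟨p.snd, hadj.symm, ?_⟩
  have hle : G.dist p.snd v₀ ≤ p.tail.length := dist_le _
  rw [Walk.length_tail, hp, dist_comm, dist_comm (u := v)] at hle
  rcases hadj.diff_dist_adj (u := v₀) with h | h | h <;> omega

theorem mem_predSet_of_adj {u v : V} (h : G.Adj u v) (hd : G.dist v₀ u + 1 = G.dist v₀ v) :
    u ∈ predSet G v₀ v :=
  ⟨h, by omega⟩

theorem dist_add_one_of_mem_predSet {u v : V} (hv : G.dist v₀ v ≠ 0)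
    (hu : u ∈ predSet G v₀ v) : G.dist v₀ u + 1 = G.dist v₀ v := by
  have := hu.2
  omega

theorem IntervalCondition.clusterOf_eq (hI : IntervalCondition G v₀) {v u u' : V}
    (hu : u ∈ predSet G v₀ v) (hu' : u' ∈ predSet G v₀ v) :
    clusterOf G v₀ u = clusterOf G v₀ u' := by
  have hsub : predSet G v₀ v ⊆ sphere G v₀ (G.dist v₀ v - 1) := fun _ hx ↦ hx.2
  exact (clusterOf_eq_clusterOf_iff hu.2 hu'.2).2
    ((hI v ⟨u, hu⟩ ⟨u', hu'⟩).map (G.induceHomOfLE hsub).toHom)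

theorem clusterOf_eq_of_walk_induce_sphere (hT : TriangleCondition G v₀)
    (hI : IntervalCondition G v₀) {k : ℕ} {x y : sphere G v₀ k}
    (q : (G.induce (sphere G v₀ k)).Walk x y) {u u' : V}
    (hu : u ∈ predSet G v₀ x) (hu' : u' ∈ predSet G v₀ y) :
    clusterOf G v₀ u = clusterOf G v₀ u' := by
  induction q generalizing u with
  | nil => exact hI.clusterOf_eq hu hu'
  | @cons a b c hab _ ih =>
    have hd : G.dist v₀ a = G.dist v₀ b := a.2.trans b.2.symm
    obtain ⟨t, hta, htb, ht⟩ := hT a b hab hd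
    exact (hI.clusterOf_eq hu ⟨hta, ht⟩).trans (ih ⟨htb, hd ▸ ht⟩ hu')

theorem clusterOf_eq_of_mem_predSet (hT : TriangleCondition G v₀) (hI : IntervalCondition G v₀)
    {v v' u u' : V} (hc : clusterOf G v₀ v = clusterOf G v₀ v')
    (hu : u ∈ predSet G v₀ v) (hu' : u' ∈ predSet G v₀ v') :
    clusterOf G v₀ u = clusterOf G v₀ u' := by
  obtain ⟨q⟩ := (clusterOf_eq_clusterOf_iff rfl (congrArg Sigma.fst hc).symm).1 hc
  exact clusterOf_eq_of_walk_induce_sphere hT hI q hu hu'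

theorem exists_mem_support_clusterOf_eq (hT : TriangleCondition G v₀)
    (hI : IntervalCondition G v₀) {v u : V} (p : G.Walk v v₀) (hv : G.dist v₀ v ≠ 0)
    (hu : u ∈ predSet G v₀ v) :
    ∃ w ∈ p.support, clusterOf G v₀ w = clusterOf G v₀ u := by
  classical
  have hp : ¬p.Nil := Walk.not_nil_of_ne fun h ↦ hv (h ▸ dist_self)
  have hadj : G.Adj v p.snd := p.adj_snd hp
  have mem_support {w : V} (hw : w ∈ p.tail.support) : w ∈ p.support := by
    rw [Walk.support_tail_of_not_nil _ hp] at hw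
    exact List.mem_of_mem_tail hw
  rcases hadj.diff_dist_adj (u := v₀) with h | h | h
  · obtain ⟨t, htv, hts, ht⟩ := hT v p.snd hadj h.symm
    obtain ⟨w, hw, hwt⟩ :=
      exists_mem_support_clusterOf_eq hT hI p.tail (h ▸ hv) ⟨hts, h ▸ ht⟩
    exact ⟨w, mem_support hw, hwt.trans (hI.clusterOf_eq ⟨htv, ht⟩ hu)⟩
  · obtain ⟨w, hw, hwv⟩ :=
      exists_mem_support_clusterOf_eq hT hI p.tail (by omega) ⟨hadj, by omega⟩
    have hdw : G.dist v₀ w = G.dist v₀ v := congrArg Sigma.fst hwv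
    obtain ⟨u', hu'⟩ := exists_mem_predSet (hdw ▸ hv)
    obtain ⟨w', hw', hw'u'⟩ :=
      exists_mem_support_clusterOf_eq hT hI (p.tail.dropUntil w hw) (hdw ▸ hv) hu'
    exact ⟨w', mem_support (p.tail.support_dropUntil_subset_support hw hw'),
      hw'u'.trans (clusterOf_eq_of_mem_predSet hT hI hwv hu' hu)⟩
  · exact ⟨p.snd, mem_support p.tail.start_mem_support,
      hI.clusterOf_eq ⟨hadj.symm, h⟩ hu⟩
termination_by p.length
decreasing_by
  classical
  all_goals
    have := Walk.length_tail_add_one hp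
    first | omega | have := p.tail.length_dropUntil_le_length hw; omega

theorem clusterGraph_adj_clusterOf_of_mem_predSet {u v : V} (hv : G.dist v₀ v ≠ 0)
    (hu : u ∈ predSet G v₀ v) :
    (clusterGraph G v₀).Adj (clusterOf G v₀ u) (clusterOf G v₀ v) := by
  refine ⟨fun h ↦ ?_, u, v, hu.1, mem_clusterOf u, mem_clusterOf v⟩
  have := dist_add_one_of_mem_predSet hv hu
  have : G.dist v₀ u = G.dist v₀ v := congrArg Sigma.fst h
  omega

theorem eq_clusterOf_of_clusterGraph_adj (hT : TriangleCondition G v₀)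
    (hI : IntervalCondition G v₀) {u v : V} {C : Cluster G v₀} (hu : u ∈ predSet G v₀ v)
    (hC : C.1 + 1 = G.dist v₀ v) (hadj : (clusterGraph G v₀).Adj C (clusterOf G v₀ v)) :
    C = clusterOf G v₀ u := by
  obtain ⟨-, a, b, hab, ha, hb⟩ := hadj
  rw [memCluster_iff_clusterOf_eq] at ha hb
  subst ha
  have hdb : G.dist v₀ b = G.dist v₀ v := congrArg Sigma.fst hb
  have hda : G.dist v₀ a + 1 = G.dist v₀ b := hC.trans hdb.symm
  exact clusterOf_eq_of_mem_predSet hT hI hb (mem_predSet_of_adj hab hda) hu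

end

theorem stmt15_general {V : Type*} (G : SimpleGraph V) (v₀ : V)
    (hW : IsWeetman G) :
    ∀ C : Cluster G v₀, 1 ≤ C.1 →
      (∃! C' : Cluster G v₀, C'.1 + 1 = C.1 ∧ (clusterGraph G v₀).Adj C' C) ∧
      (∀ C' : Cluster G v₀, C'.1 + 1 = C.1 → (clusterGraph G v₀).Adj C' C →
        ∀ v : V, memCluster G v₀ v C → ∀ p : G.Walk v₀ v,
          ∃ w : V, memCluster G v₀ w C' ∧ w ∈ p.support) := by
  obtain ⟨hT, hI⟩ := hW v₀
  intro C hC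
  refine ⟨?_, fun C' hC' hadj v hv p ↦ ?_⟩
  · obtain ⟨v, rfl⟩ := exists_clusterOf_eq C
    have hv : G.dist v₀ v ≠ 0 := Nat.one_le_iff_ne_zero.1 hC
    obtain ⟨u, hu⟩ := exists_mem_predSet hv
    exact ⟨clusterOf G v₀ u,
      ⟨dist_add_one_of_mem_predSet hv hu, clusterGraph_adj_clusterOf_of_mem_predSet hv hu⟩,
      fun C' h ↦ eq_clusterOf_of_clusterGraph_adj hT hI hu h.1 h.2⟩
  · rw [memCluster_iff_clusterOf_eq] at hv
    subst hv
    have hv : G.dist v₀ v ≠ 0 := Nat.one_le_iff_ne_zero.1 hC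
    obtain ⟨u, hu⟩ := exists_mem_predSet hv
    obtain rfl := eq_clusterOf_of_clusterGraph_adj hT hI hu hC' hadj
    obtain ⟨w, hw, hwu⟩ := exists_mem_support_clusterOf_eq hT hI p.reverse hv hu
    exact ⟨w, memCluster_iff_clusterOf_eq.2 hwu, by simpa using hw⟩

/-- In a Weetman graph, every cluster at level `k ≥ 1` has a unique neighboring cluster
at level `k - 1` (its ancestor), and every walk from `v₀` to a vertex of the cluster
passes through a vertex of this ancestor. -/
theorem stmt15 {V : Type*} [Fintype V] (G : SimpleGraph V) (v₀ : V)
    (hconn : G.Connected) (hW : IsWeetman G) :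
    ∀ C : Cluster G v₀, 1 ≤ C.1 →
      (∃! C' : Cluster G v₀, C'.1 + 1 = C.1 ∧ (clusterGraph G v₀).Adj C' C) ∧
      (∀ C' : Cluster G v₀, C'.1 + 1 = C.1 → (clusterGraph G v₀).Adj C' C →
        ∀ v : V, memCluster G v₀ v C → ∀ p : G.Walk v₀ v,
          ∃ w : V, memCluster G v₀ w C' ∧ w ∈ p.support) :=
  stmt15_general G v₀ hW
end
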